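/- Let D be a regular 𝓓-class of IG(E) and e ∈ E. Then there exists r ∈ D with r·ē ∈ D if and only if there exists s ∈ D with ē·s ∈ D. -/
import Mathlib


section Green

variable {T : Type*} [Semigroup T]

/-- Green's relation 𝓡. -/
def GreenR (a b : T) : Prop := a = b ∨ ∃ x y : T, a * x = b ∧ b * y = a

/-- Green's relation 𝓛. -/
def GreenL (a b : T) : Prop := a = b ∨ ∃ x y : T, x * a = b ∧ y * b = a

/-- Green's relation 𝓓 = 𝓡 ∘ 𝓛. -/
def GreenD (a b : T) : Prop := ∃ c : T, GreenR a c ∧ GreenL c b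

/-- An element is regular if `a = a * b * a` for some `b`. -/
def IsRegularElem (a : T) : Prop := ∃ b : T, a * b * a = a

/-- The principal two-sided ideal `T¹ a T¹`. -/
def principalIdeal (a : T) : Set T :=
  {x | x = a ∨ (∃ u, u * a = x) ∨ (∃ v, a * v = x) ∨ ∃ u v, u * a * v = x}

/-- Green's relation 𝓙. -/
def GreenJ (a b : T) : Prop := principalIdeal a = principalIdeal b

/-- The 𝓙-preorder. -/
def JleRel (a b : T) : Prop := principalIdeal a ⊆ principalIdeal b

/-- Strict 𝓙-order. -/
def JltRel (a b : T) : Prop := JleRel a b ∧ ¬ JleRel b a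

/-- `u` is a (two-sided) identity element. -/
def IsIdentityElem (u : T) : Prop := ∀ x : T, u * x = x ∧ x * u = x

/-- The relation 𝓡̃. -/
def RTilde (a b : T) : Prop := ∀ ε : T, ε * ε = ε → (ε * a = a ↔ ε * b = b)

/-- The relation 𝓛̃. -/
def LTilde (a b : T) : Prop := ∀ ε : T, ε * ε = ε → (a * ε = a ↔ b * ε = b)

/-- `blockProd p i k = p i * p (i+1) * ⋯ * p (i+k)`. -/
def blockProd (p : ℕ → T) (i : ℕ) : ℕ → T
  | 0 => p i
  | k + 1 => blockProd p i k * p (i + (k + 1))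

/-- Multiply `x` by optional (possibly empty) words on both sides. -/
def withCtx (u : Option T) (x : T) (v : Option T) : T :=
  match u, v with
  | none, none => x
  | some u', none => u' * x
  | none, some v' => x * v'
  | some u', some v' => u' * x * v'

/-- Multiply by an optional word on the left. -/
def leftCtx (u : Option T) (x : T) : T := match u with | none => x | some u' => u' * x

/-- Multiply by an optional word on the right. -/
def rightCtx (x : T) (v : Option T) : T := match v with | none => x | some v' => x * v'

end Green

section IGdef

/-- The set of idempotents of `S`. -/
abbrev IdemE (S : Type*) [Semigroup S] : Type _ := {x : S // x * x = x}

variable {S : Type*} [Semigroup S]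

/-- `e, f` form a basic pair if `{e,f} ∩ {ef,fe} ≠ ∅`. -/
def BasicPair (e f : IdemE S) : Prop :=
  (e : S) * f = e ∨ (e : S) * f = f ∨ (f : S) * e = e ∨ (f : S) * e = f

/-- The defining relations of IG(E): `ef = g` whenever `e, f` is a basic pair with
product `g` in `S`. -/
def igRelBase (u v : FreeSemigroup (IdemE S)) : Prop :=
  ∃ e f g : IdemE S, BasicPair e f ∧ (g : S) = (e : S) * (f : S) ∧
    u = FreeSemigroup.of e * FreeSemigroup.of f ∧ v = FreeSemigroup.of g

/-- The congruence on the free semigroup `E⁺` generated by the defining relations. -/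
def igCon (S : Type*) [Semigroup S] : Con (FreeSemigroup (IdemE S)) :=
  conGen (fun u v => igRelBase u v)

/-- The free idempotent generated semigroup IG(E). -/
abbrev IG (S : Type*) [Semigroup S] := (igCon S).Quotient

/-- `w̄`, the image of a word `w ∈ E⁺` in IG(E). -/
def igBar (w : FreeSemigroup (IdemE S)) : IG S := (w : (igCon S).Quotient)

/-- The list of letters of a word. -/
def wordList (w : FreeSemigroup (IdemE S)) : List (IdemE S) := w.head :: w.tail

/-- The length of a word. -/
def wlen (w : FreeSemigroup (IdemE S)) : ℕ := (wordList w).length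

/-- Length of an optional word. -/
def olen (u : Option (FreeSemigroup (IdemE S))) : ℕ :=
  match u with | none => 0 | some u' => wlen u'

/-- `p 1, …, p m` is an r-factorisation of `w`: each factor represents a regular
element of IG(E). -/
def IsRFact (w : FreeSemigroup (IdemE S)) (m : ℕ) (p : ℕ → FreeSemigroup (IdemE S)) : Prop :=
  1 ≤ m ∧ blockProd p 1 (m - 1) = w ∧ ∀ i, 1 ≤ i → i ≤ m → IsRegularElem (igBar (p i))

/-- A minimal r-factorisation: no product of two or more consecutive factors is regular. -/
def IsMinRFact (w : FreeSemigroup (IdemE S)) (m : ℕ) (p : ℕ → FreeSemigroup (IdemE S)) : Prop :=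
  IsRFact w m p ∧
    ∀ i j, 1 ≤ i → i < j → j ≤ m → ¬ IsRegularElem (igBar (blockProd p i (j - i)))

/-- The relation ≈ on m-tuples of words. -/
def TupleApprox (m : ℕ) (p q : ℕ → FreeSemigroup (IdemE S)) : Prop :=
  (∃ i, 1 ≤ i ∧ i ≤ m ∧ igBar (p i) = igBar (q i) ∧
    ∀ j, 1 ≤ j → j ≤ m → j ≠ i → p j = q j) ∨
  (∃ i, ∃ e : IdemE S, 1 ≤ i ∧ i < m ∧
    igBar (p i) = igBar (q i * FreeSemigroup.of e) ∧
    igBar (q (i + 1)) = igBar (FreeSemigroup.of e * p (i + 1)) ∧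
    ∀ j, 1 ≤ j → j ≤ m → j ≠ i → j ≠ i + 1 → p j = q j) ∨
  (∃ i, ∃ e : IdemE S, 1 ≤ i ∧ i < m ∧
    igBar (q i) = igBar (p i * FreeSemigroup.of e) ∧
    igBar (p (i + 1)) = igBar (FreeSemigroup.of e * q (i + 1)) ∧
    ∀ j, 1 ≤ j → j ≤ m → j ≠ i → j ≠ i + 1 → p j = q j)

/-- The relation ∼: the transitive closure of ≈. -/
def TupleSim (m : ℕ) (p q : ℕ → FreeSemigroup (IdemE S)) : Prop :=
  Relation.TransGen (TupleApprox m) p q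

/-- One application of a defining relation of IG(E) inside a word. -/
def RewriteStep (w w' : FreeSemigroup (IdemE S)) : Prop :=
  ∃ (u v : Option (FreeSemigroup (IdemE S))) (x y : FreeSemigroup (IdemE S)),
    (igRelBase x y ∨ igRelBase y x) ∧ w = withCtx u x v ∧ w' = withCtx u y v

/-- `e` is a seed of `w` at (1-based) position `k`. -/
def SeedAt (w : FreeSemigroup (IdemE S)) (e : IdemE S) (k : ℕ) : Prop :=
  ∃ u v : Option (FreeSemigroup (IdemE S)),
    w = withCtx u (FreeSemigroup.of e) v ∧ k = olen u + 1 ∧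
    GreenL (igBar (leftCtx u (FreeSemigroup.of e))) (igBar (FreeSemigroup.of e)) ∧
    GreenR (igBar (FreeSemigroup.of e)) (igBar (rightCtx (FreeSemigroup.of e) v))

/-- The coordinate (position within `w` of the first letter) of the `i`-th factor. -/
def wcoord (p : ℕ → FreeSemigroup (IdemE S)) (i : ℕ) : ℕ :=
  1 + ∑ j ∈ Finset.Ico 1 i, wlen (p j)

end IGdef

section GreenLemmas

variable {T : Type*} [Semigroup T]

theorem GreenR.refl' (a : T) : GreenR a a := Or.inl rfl

theorem GreenR.symm' {a b : T} (h : GreenR a b) : GreenR b a := by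
  rcases h with rfl | ⟨x, y, h1, h2⟩
  · exact Or.inl rfl
  · exact Or.inr ⟨y, x, h2, h1⟩

theorem GreenR.trans' {a b c : T} (h1 : GreenR a b) (h2 : GreenR b c) : GreenR a c := by
  rcases h1 with rfl | ⟨x, y, hx, hy⟩
  · exact h2
  rcases h2 with rfl | ⟨u, v, hu, hv⟩
  · exact Or.inr ⟨x, y, hx, hy⟩
  · exact Or.inr ⟨x * u, v * y, by rw [← mul_assoc, hx, hu], by rw [← mul_assoc, hv, hy]⟩

theorem GreenL.refl' (a : T) : GreenL a a := Or.inl rfl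

theorem GreenL.symm' {a b : T} (h : GreenL a b) : GreenL b a := by
  rcases h with rfl | ⟨x, y, h1, h2⟩
  · exact Or.inl rfl
  · exact Or.inr ⟨y, x, h2, h1⟩

theorem GreenL.trans' {a b c : T} (h1 : GreenL a b) (h2 : GreenL b c) : GreenL a c := by
  rcases h1 with rfl | ⟨x, y, hx, hy⟩
  · exact h2
  rcases h2 with rfl | ⟨u, v, hu, hv⟩
  · exact Or.inr ⟨x, y, hx, hy⟩
  · exact Or.inr ⟨u * x, y * v, by rw [mul_assoc, hx, hu], by rw [mul_assoc, hv, hy]⟩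

/-- L and R commute. -/
theorem green_comm {a b c : T} (hL : GreenL a b) (hR : GreenR b c) :
    ∃ d : T, GreenR a d ∧ GreenL d c := by
  rcases hL with rfl | ⟨p, q, hp, hq⟩
  · exact ⟨c, hR, GreenL.refl' c⟩
  rcases hR with rfl | ⟨u, v, hu, hv⟩
  · refine ⟨a, GreenR.refl' a, Or.inr ⟨p, q, hp, hq⟩⟩
  refine ⟨a * u, ?_, ?_⟩
  · refine Or.inr ⟨u, v, rfl, ?_⟩
    rw [← hq, mul_assoc, mul_assoc, ← mul_assoc b, hu, hv]
  · refine Or.inr ⟨p, q, ?_, ?_⟩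
    · rw [← mul_assoc, hp, hu]
    · rw [← hu, ← mul_assoc, hq]

theorem GreenD.refl' (a : T) : GreenD a a := ⟨a, GreenR.refl' a, GreenL.refl' a⟩

theorem GreenD.symm' {a b : T} (h : GreenD a b) : GreenD b a := by
  obtain ⟨c, hR, hL⟩ := h
  exact green_comm (GreenL.symm' hL) (GreenR.symm' hR)

theorem GreenD.trans' {a b c : T} (h1 : GreenD a b) (h2 : GreenD b c) : GreenD a c := by
  obtain ⟨u, haR, huL⟩ := h1
  obtain ⟨v, hbR, hvL⟩ := h2
  obtain ⟨d, hud, hdv⟩ := green_comm huL hbR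
  exact ⟨d, GreenR.trans' haR hud, GreenL.trans' hdv hvL⟩

theorem isRegular_of_greenR {a b : T} (ha : IsRegularElem a) (h : GreenR a b) :
    IsRegularElem b := by
  rcases h with rfl | ⟨x, y, hx, hy⟩
  · exact ha
  obtain ⟨c, hc⟩ := ha
  refine ⟨y * c, ?_⟩
  rw [← mul_assoc, hy, ← hx, ← mul_assoc, hc]

theorem isRegular_of_greenL {a b : T} (ha : IsRegularElem a) (h : GreenL a b) :
    IsRegularElem b := by
  rcases h with rfl | ⟨x, y, hx, hy⟩
  · exact ha
  obtain ⟨c, hc⟩ := ha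
  refine ⟨c * y, ?_⟩
  rw [mul_assoc, mul_assoc c, hy, ← hx, mul_assoc, ← mul_assoc a, hc]

theorem isRegular_of_greenD {a b : T} (ha : IsRegularElem a) (h : GreenD a b) :
    IsRegularElem b := by
  obtain ⟨c, hR, hL⟩ := h
  exact isRegular_of_greenL (isRegular_of_greenR ha hR) hL

/-- If `x` is regular and `x * f = x` with `f` idempotent, then there is `s` in the
𝓓-class of `x` with `f * s = s`. -/
theorem exists_left_fixed {x f : T} (hf : f * f = f)
    (hxf : x * f = x) (hxreg : IsRegularElem x) : ∃ s : T, GreenD x s ∧ f * s = s := by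
  obtain ⟨b, hb⟩ := hxreg
  have hb0 : x * (b * x) = x := by rw [← mul_assoc, hb]
  have hb' : ∀ t, x * (b * (x * t)) = x * t := fun t => by
    rw [← mul_assoc, ← mul_assoc, hb]
  have hxf' : ∀ t, x * (f * t) = x * t := fun t => by rw [← mul_assoc, hxf]
  refine ⟨f * (b * (x * b)), ⟨x * (f * (b * (x * b))), ?_, ?_⟩, by rw [← mul_assoc, hf]⟩
  · refine Or.inr ⟨f * (b * (x * b)), x, rfl, ?_⟩
    simp only [mul_assoc]
    rw [hxf', hb', hb0]
  · refine Or.inr ⟨f * (b * (x * b)), x, ?_, rfl⟩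
    simp only [mul_assoc]
    rw [← mul_assoc x f, hxf, hb', hb']

/-- Dual: if `x` is regular and `f * x = x` with `f` idempotent, then there is `r` in the
𝓓-class of `x` with `r * f = r`. -/
theorem exists_right_fixed {x f : T} (hf : f * f = f)
    (hfx : f * x = x) (hxreg : IsRegularElem x) : ∃ r : T, GreenD x r ∧ r * f = r := by
  obtain ⟨b, hb⟩ := hxreg
  have hb0 : x * (b * x) = x := by rw [← mul_assoc, hb]
  have hb' : ∀ t, x * (b * (x * t)) = x * t := fun t => by
    rw [← mul_assoc, ← mul_assoc, hb]
  refine ⟨b * (x * (b * f)), GreenD.symm' ⟨b * (x * (b * f)) * x, ?_, ?_⟩, ?_⟩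
  · refine Or.inr ⟨x, b * (x * (b * f)), rfl, ?_⟩
    simp only [mul_assoc]
    rw [← mul_assoc f x, hfx, hb', hb']
  · refine Or.inr ⟨x, b * (x * (b * f)), ?_, rfl⟩
    simp only [mul_assoc]
    rw [hfx, hb', hb0]
  · simp only [mul_assoc]
    rw [hf]

end GreenLemmas

theorem ebar_idem {S : Type*} [Semigroup S] (e : IdemE S) :
    (igBar (FreeSemigroup.of e) : IG S) * igBar (FreeSemigroup.of e) =
      igBar (FreeSemigroup.of e) := by
  show ((FreeSemigroup.of e * FreeSemigroup.of e : FreeSemigroup (IdemE S)) : IG S) =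
    ((FreeSemigroup.of e : FreeSemigroup (IdemE S)) : IG S)
  refine (Con.eq _).mpr ?_
  exact ConGen.Rel.of _ _ ⟨e, e, e, Or.inl e.2, e.2.symm, rfl, rfl⟩

theorem stmt9 {S : Type*} [Semigroup S] [Finite (IdemE S)]
    (a : IG S) (hreg : ∃ ε : IG S, ε * ε = ε ∧ GreenD a ε) (e : IdemE S) :
    (∃ r : IG S, GreenD a r ∧ GreenD a (r * igBar (FreeSemigroup.of e))) ↔
    (∃ s : IG S, GreenD a s ∧ GreenD a (igBar (FreeSemigroup.of e) * s)) := by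
  obtain ⟨ε, hεi, haε⟩ := hreg
  have hεreg : IsRegularElem ε := ⟨ε, by rw [hεi, hεi]⟩
  have hEE : (igBar (FreeSemigroup.of e) : IG S) * igBar (FreeSemigroup.of e) =
      igBar (FreeSemigroup.of e) := ebar_idem e
  constructor
  · rintro ⟨r, hr, hx⟩
    have hxf : (r * igBar (FreeSemigroup.of e)) * igBar (FreeSemigroup.of e) =
        r * igBar (FreeSemigroup.of e) := by rw [mul_assoc, hEE]
    have hxreg : IsRegularElem (r * igBar (FreeSemigroup.of e)) :=
      isRegular_of_greenD hεreg (GreenD.trans' (GreenD.symm' haε) hx)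
    obtain ⟨s, hDs, hfs⟩ := exists_left_fixed hEE hxf hxreg
    exact ⟨s, GreenD.trans' hx hDs, by rw [hfs]; exact GreenD.trans' hx hDs⟩
  · rintro ⟨s, hs, hx⟩
    have hfx : igBar (FreeSemigroup.of e) * ((igBar (FreeSemigroup.of e) : IG S) * s) =
        igBar (FreeSemigroup.of e) * s := by rw [← mul_assoc, hEE]
    have hxreg : IsRegularElem ((igBar (FreeSemigroup.of e) : IG S) * s) :=
      isRegular_of_greenD hεreg (GreenD.trans' (GreenD.symm' haε) hx)
    obtain ⟨r, hDr, hrf⟩ := exists_right_fixed hEE hfx hxreg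
    exact ⟨r, GreenD.trans' hx hDr, by rw [hrf]; exact GreenD.trans' hx hDr⟩
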